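/- For every n ≥ 0, the number of packed words of length n equals the number of packed forests of weight n, i.e. |PW_n| = #𝔉_n. -/

import Mathlib

/-- The maximum letter of a word (a list of natural numbers), with `wmax [] = 0`. -/
def wmax (w : List ℕ) : ℕ := w.foldr max 0

/-- A word over the positive integers is packed if every letter from `1` to its maximum
occurs in it. -/
def IsPacked (w : List ℕ) : Prop :=
  (∀ x ∈ w, 0 < x) ∧ ∀ i : ℕ, 0 < i → i ≤ wmax w → i ∈ w

/-- A labeled biplane tree: every node carries a label (a list of positive integers)
and an ordered pair of (possibly empty) ordered forests of children. -/
inductive LTree : Type where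
  | node : List ℕ → List LTree → List LTree → LTree

instance : Inhabited LTree := ⟨.node [] [] []⟩

mutual
  /-- The weight of a labeled biplane tree: the sum over all nodes of the lengths of
  their labels. -/
  def LTree.weight : LTree → ℕ
    | .node I fl fr => I.length + forestWeight fl + forestWeight fr
  /-- The weight of a forest: the sum of the weights of its trees. -/
  def forestWeight : List LTree → ℕ
    | [] => 0
    | t :: ts => t.weight + forestWeight ts
end

/-- The right-weight `ω_r(t) = p + ω(r_1) + ⋯ + ω(r_d)`. -/
def rightWeight : LTree → ℕ
  | .node I _ fr => I.length + forestWeight fr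

/-- The left forest of a labeled biplane tree. -/
def leftForest : LTree → List LTree
  | .node _ fl _ => fl

/-- Packed trees: the label `I = (i_1 < ⋯ < i_p)` is a nonempty strictly increasing list
of positive integers; if the right forest is empty then `I = (1, …, p)`; otherwise
`1 ≤ i_1 ≤ ω(r_1)` and `1 ≤ ω_r(t) + 1 − i_p ≤ ω(r_d)`; and all subtrees are packed. -/
inductive IsPT : LTree → Prop where
  | mk (I : List ℕ) (fl fr : List LTree) :
      I ≠ [] → I.Pairwise (· < ·) → (∀ i ∈ I, 0 < i) →
      (fr = [] → I = List.range' 1 I.length) →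
      (fr ≠ [] →
        (1 ≤ I.headI ∧ I.headI ≤ fr.headI.weight ∧
         1 ≤ rightWeight (.node I fl fr) + 1 - I.getLastI ∧
         rightWeight (.node I fl fr) + 1 - I.getLastI ≤ fr.getLastI.weight)) →
      (∀ t ∈ fl, IsPT t) → (∀ t ∈ fr, IsPT t) →
      IsPT (.node I fl fr)

/-!
The map `forestWord` is a weight-preserving bijection from packed forests onto packed words.
A forest `[t₁, …, t_k]` goes to the concatenation of the words of its trees, each raised above
all letters to its right, so that the trees become the blocks between global descents; the word
of a packed tree is indecomposable. For `t = Node(I, f_ℓ, f_r)`, with `ℓ` and `x` the words of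
`f_ℓ` and `f_r` and `M = max x + max ℓ + 1`, the word of `t` is `ℓ` raised by `max x`, followed by
`x` with `M` inserted at the positions `I`. The bounds on `i₁` and `i_p` in the definition of a
packed tree are exactly what is needed to read `t` back: `i₁ ≤ ω(r₁)` makes the raised copy of
`ℓ` the longest prefix that can be cut off (`IsLeftCut`), and `ω_r + 1 − i_p ≤ ω(r_d)` makes the
word indecomposable.
-/

theorem wmax_nil : wmax [] = 0 := rfl

theorem wmax_cons (a : ℕ) (w : List ℕ) : wmax (a :: w) = max a (wmax w) := rfl

theorem wmax_le_iff {w : List ℕ} {m : ℕ} : wmax w ≤ m ↔ ∀ a ∈ w, a ≤ m := by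
  induction w with
  | nil => simp [wmax_nil]
  | cons b w ih => simp [wmax_cons, ih]

theorem le_wmax_of_mem {a : ℕ} {w : List ℕ} (h : a ∈ w) : a ≤ wmax w :=
  wmax_le_iff.1 le_rfl a h

theorem wmax_mem {w : List ℕ} (h : w ≠ []) : wmax w ∈ w := by
  induction w with
  | nil => exact absurd rfl h
  | cons b w ih =>
    rcases eq_or_ne w [] with rfl | hw
    · simp [wmax_cons, wmax_nil]
    · rcases max_choice b (wmax w) with hb | hw' <;> rw [wmax_cons]
      · simp [hb]
      · rw [hw']; exact List.mem_cons_of_mem _ (ih hw)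

theorem wmax_congr {u v : List ℕ} (h : ∀ x, x ∈ u ↔ x ∈ v) : wmax u = wmax v :=
  le_antisymm (wmax_le_iff.2 fun _ hx => le_wmax_of_mem ((h _).1 hx))
    (wmax_le_iff.2 fun _ hx => le_wmax_of_mem ((h _).2 hx))

theorem wmax_append (u v : List ℕ) : wmax (u ++ v) = max (wmax u) (wmax v) := by
  induction u with
  | nil => simp [wmax_nil]
  | cons a u ih => simp [wmax_cons, ih, max_assoc]

theorem wmax_map_add {w : List ℕ} (h : w ≠ []) (c : ℕ) :
    wmax (w.map (· + c)) = wmax w + c := by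
  induction w with
  | nil => exact absurd rfl h
  | cons a w ih =>
    rcases eq_or_ne w [] with rfl | hw
    · simp [wmax_cons, wmax_nil]
    · rw [List.map_cons, wmax_cons, wmax_cons, ih hw, Nat.add_max_add_right]

theorem isPacked_congr {u v : List ℕ} (h : ∀ x, x ∈ u ↔ x ∈ v) (hu : IsPacked u) :
    IsPacked v := by
  refine ⟨fun x hx => hu.1 x ((h x).2 hx), fun i hi hiv => (h i).1 (hu.2 i hi ?_)⟩
  rwa [wmax_congr h]

theorem IsPacked.wmax_pos {w : List ℕ} (hw : IsPacked w) (hne : w ≠ []) : 0 < wmax w :=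
  hw.1 _ (wmax_mem hne)

theorem wmax_add_add_one_not_mem (w : List ℕ) (a : ℕ) : wmax w + a + 1 ∉ w :=
  fun h => absurd (le_wmax_of_mem h) (by omega)

def shiftAppend (u v : List ℕ) : List ℕ := u.map (· + wmax v) ++ v

theorem wmax_shiftAppend (u v : List ℕ) : wmax (shiftAppend u v) = wmax u + wmax v := by
  rcases eq_or_ne u [] with rfl | hu
  · simp [shiftAppend, wmax_nil]
  · rw [shiftAppend, wmax_append, wmax_map_add hu]
    omega

theorem IsPacked.shiftAppend {u v : List ℕ} (hu : IsPacked u) (hv : IsPacked v) :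
    IsPacked (shiftAppend u v) := by
  refine ⟨fun x hx => ?_, fun i hi hile => ?_⟩
  · rcases List.mem_append.1 hx with hx | hx
    · obtain ⟨b, hb, rfl⟩ := List.mem_map.1 hx
      exact Nat.add_pos_left (hu.1 b hb) _
    · exact hv.1 x hx
  · rw [wmax_shiftAppend] at hile
    refine List.mem_append.2 ?_
    by_cases hiv : i ≤ wmax v
    · exact .inr (hv.2 i hi hiv)
    · exact .inl (List.mem_map.2 ⟨i - wmax v, hu.2 _ (by omega) (by omega), by omega⟩)

theorem IsPacked.filter_ne_wmax {w : List ℕ} (hw : IsPacked w) :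
    IsPacked (w.filter (· ≠ wmax w)) ∧ wmax (w.filter (· ≠ wmax w)) = wmax w - 1 := by
  have hmem : ∀ x, x ∈ w.filter (· ≠ wmax w) ↔ x ∈ w ∧ x ≠ wmax w := by simp
  have hmax : wmax (w.filter (· ≠ wmax w)) = wmax w - 1 := by
    refine le_antisymm (wmax_le_iff.2 fun x hx => ?_) ?_
    · have := le_wmax_of_mem ((hmem x).1 hx).1
      have := ((hmem x).1 hx).2
      omega
    · rcases Nat.lt_or_ge (wmax w) 2 with h | h
      · omega
      · exact le_wmax_of_mem ((hmem _).2 ⟨hw.2 _ (by omega) (by omega), by omega⟩)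
  refine ⟨⟨fun x hx => hw.1 x ((hmem x).1 hx).1, fun i hi hile => ?_⟩, hmax⟩
  rw [hmax] at hile
  exact (hmem i).2 ⟨hw.2 i hi (by omega), by omega⟩

theorem shiftAppend_map_sub {B R : List ℕ} (hB : ∀ a ∈ B, wmax R < a) :
    shiftAppend (B.map (· - wmax R)) R = B ++ R := by
  rw [shiftAppend, List.map_map]
  congr 1
  conv_rhs => rw [← List.map_id B]
  exact List.map_congr_left fun a ha => Nat.sub_add_cancel (hB a ha).le

theorem IsPacked.wmax_lt_of_append {B R : List ℕ} (h : IsPacked (B ++ R))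
    (hlt : ∀ b ∈ R, ∀ a ∈ B, b < a) : ∀ a ∈ B, wmax R < a := by
  intro a ha
  rcases eq_or_ne R [] with hR | hR
  · rw [hR, wmax_nil]; exact h.1 a (by simp [ha])
  · exact hlt _ (wmax_mem hR) a ha

theorem IsPacked.right_of_append {B R : List ℕ} (h : IsPacked (B ++ R))
    (hlt : ∀ b ∈ R, ∀ a ∈ B, b < a) : IsPacked R := by
  refine ⟨fun x hx => h.1 x (by simp [hx]), fun i hi hile => ?_⟩
  rcases List.mem_append.1 (h.2 i hi (by rw [wmax_append]; omega)) with hiB | hiR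
  · exact absurd (h.wmax_lt_of_append hlt i hiB) (by omega)
  · exact hiR

theorem IsPacked.left_of_append {B R : List ℕ} (h : IsPacked (B ++ R))
    (hlt : ∀ b ∈ R, ∀ a ∈ B, b < a) : IsPacked (B.map (· - wmax R)) := by
  have hB := h.wmax_lt_of_append hlt
  refine ⟨fun x hx => ?_, fun i hi hile => ?_⟩
  · obtain ⟨a, ha, rfl⟩ := List.mem_map.1 hx
    have := hB a ha; omega
  · have hne : B.map (· - wmax R) ≠ [] := by rintro h0; rw [h0, wmax_nil] at hile; omega
    obtain ⟨a, ha, hae⟩ := List.mem_map.1 (wmax_mem hne)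
    have hia : i + wmax R ≤ wmax (B ++ R) := by
      have := le_wmax_of_mem (List.mem_append_left R ha); omega
    rcases List.mem_append.1 (h.2 _ (by omega) hia) with hiB | hiR
    · exact List.mem_map.2 ⟨_, hiB, by simp⟩
    · exact absurd (le_wmax_of_mem hiR) (by omega)

/-- For `0 < q < w.length` this says that `w` has a global descent at `q`. -/
def IsSplit (w : List ℕ) (q : ℕ) : Prop :=
  ∀ b ∈ w.drop q, ∀ a ∈ w.take q, b < a

def Indecomposable (w : List ℕ) : Prop :=
  ∀ q, 0 < q → q < w.length → ¬IsSplit w q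

theorem isSplit_of_length_le {w : List ℕ} {q : ℕ} (h : w.length ≤ q) : IsSplit w q := by
  simp [IsSplit, List.drop_eq_nil_of_le h]

theorem isSplit_append_length {A B : List ℕ} :
    IsSplit (A ++ B) A.length ↔ ∀ b ∈ B, ∀ a ∈ A, b < a := by
  simp only [IsSplit, List.drop_left, List.take_left]

theorem isSplit_map_add {w : List ℕ} {q : ℕ} (c : ℕ) :
    IsSplit (w.map (· + c)) q ↔ IsSplit w q := by
  simp [IsSplit, ← List.map_drop, ← List.map_take]

theorem IsSplit.of_append_left {A B : List ℕ} {r : ℕ} (h : IsSplit (A ++ B) r)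
    (hr : r ≤ A.length) : IsSplit A r := by
  intro b hb a ha
  refine h b ?_ a ?_
  · rw [List.drop_append_of_le_length hr]; exact List.mem_append_left _ hb
  · rwa [List.take_append_of_le_length hr]

theorem IsSplit.of_append_right {A B : List ℕ} {r : ℕ} (h : IsSplit (A ++ B) (A.length + r)) :
    IsSplit B r := by
  intro b hb a ha
  refine h b ?_ a ?_
  · rwa [List.drop_length_add_append]
  · rw [List.take_length_add_append]; exact List.mem_append_right _ ha

theorem IsSplit.append_left {A B : List ℕ} {r : ℕ} (h : IsSplit A r) (hr : r ≤ A.length)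
    (hlt : ∀ b ∈ B, ∀ a ∈ A, b < a) : IsSplit (A ++ B) r := by
  intro b hb a ha
  rw [List.take_append_of_le_length hr] at ha
  rw [List.drop_append_of_le_length hr] at hb
  rcases List.mem_append.1 hb with hb | hb
  · exact h b hb a ha
  · exact hlt b hb a (List.take_subset _ _ ha)

theorem IsSplit.append_right {A B : List ℕ} {r : ℕ} (h : IsSplit B r)
    (hlt : ∀ b ∈ B.drop r, ∀ a ∈ A, b < a) : IsSplit (A ++ B) (A.length + r) := by
  intro b hb a ha
  rw [List.drop_length_add_append] at hb
  rw [List.take_length_add_append] at ha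
  rcases List.mem_append.1 ha with ha | ha
  · exact hlt b hb a ha
  · exact h b hb a ha

theorem isSplit_shiftAppend {u v : List ℕ} (hu : IsPacked u) :
    IsSplit (shiftAppend u v) u.length := by
  rw [shiftAppend, ← List.length_map (f := (· + wmax v)), isSplit_append_length]
  intro b hb a ha
  obtain ⟨a, ha', rfl⟩ := List.mem_map.1 ha
  have := hu.1 a ha'
  have := le_wmax_of_mem hb
  omega

theorem Indecomposable.not_isSplit_shiftAppend {u v : List ℕ} (hu : Indecomposable u) {r : ℕ}
    (hr : 0 < r) (hru : r < u.length) : ¬IsSplit (shiftAppend u v) r := fun h =>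
  hu r hr hru ((isSplit_map_add _).1 (h.of_append_left (by rw [List.length_map]; omega)))

theorem filter_eq_filter_take_append_drop {l : List ℕ} {p : ℕ → Bool} {j : ℕ}
    (hp : ∀ x ∈ l.drop j, p x) : l.filter p = (l.take j).filter p ++ l.drop j := by
  conv_lhs => rw [← List.take_append_drop j l]
  rw [List.filter_append, List.filter_eq_self.2 hp]

theorem isSplit_iff_isSplit_filter {l : List ℕ} {p : ℕ → Bool} {j : ℕ}
    (hp : ∀ x ∈ l.drop j, p x)
    (hnp : ∀ b ∈ l.drop j, ∀ a ∈ l.take j, p a = false → b < a) :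
    IsSplit l j ↔ IsSplit (l.filter p) ((l.take j).filter p).length := by
  rw [filter_eq_filter_take_append_drop hp, isSplit_append_length]
  refine ⟨fun h b hb a ha => h b hb a (List.mem_filter.1 ha).1, fun h b hb a ha => ?_⟩
  cases hpa : p a
  · exact hnp b hb a ha hpa
  · exact h b hb a (List.mem_filter.2 ⟨ha, hpa⟩)

theorem isSplit_iff_isSplit_filter_ne {s : List ℕ} {M j : ℕ} (hle : ∀ x ∈ s, x ≤ M)
    (hM : M ∉ s.drop j) :
    IsSplit s j ↔
      IsSplit (s.filter (· ≠ M)) ((s.filter (· ≠ M)).length - (s.length - j)) := by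
  have hp : ∀ x ∈ s.drop j, decide (x ≠ M) := fun x hx => by
    simpa using fun h : x = M => hM (h ▸ hx)
  have hlen := congrArg List.length (filter_eq_filter_take_append_drop hp)
  rw [List.length_append, List.length_drop] at hlen
  rw [show (s.filter (· ≠ M)).length - (s.length - j) = ((s.take j).filter (· ≠ M)).length by
    omega]
  refine isSplit_iff_isSplit_filter hp fun b hb a ha haM => ?_
  have hbM : b ≠ M := fun h => hM (h ▸ hb)
  have : a = M := by simpa using haM
  have := hle b (List.mem_of_mem_drop hb)
  omega

theorem List.headI_mem {α : Type*} [Inhabited α] {l : List α} (h : l ≠ []) :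
    l.headI ∈ l := by
  cases l with
  | nil => exact absurd rfl h
  | cons a l => exact List.mem_cons_self

theorem List.getLastI_eq_getLast {α : Type*} [Inhabited α] {l : List α} (h : l ≠ []) :
    l.getLastI = l.getLast h := by
  rw [List.getLastI_eq_getLast?_getD, List.getLast?_eq_some_getLast h, Option.getD_some]

theorem List.getLastI_mem {α : Type*} [Inhabited α] {l : List α} (h : l ≠ []) :
    l.getLastI ∈ l := by
  rw [List.getLastI_eq_getLast h]; exact List.getLast_mem h

theorem List.getLastI_cons {α : Type*} [Inhabited α] (a : α) {l : List α} (h : l ≠ []) :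
    (a :: l).getLastI = l.getLastI := by
  rw [List.getLastI_eq_getLast h, List.getLastI_eq_getLast (List.cons_ne_nil a l),
    List.getLast_cons h]

theorem headI_le_of_pairwise {I : List ℕ} (hs : I.Pairwise (· < ·)) {i : ℕ} (hi : i ∈ I) :
    I.headI ≤ i := by
  cases I with
  | nil => simp at hi
  | cons a I =>
    rcases List.mem_cons.1 hi with rfl | hi
    · exact le_rfl
    · exact ((List.pairwise_cons.1 hs).1 i hi).le

theorem le_getLastI_of_pairwise {I : List ℕ} (hs : I.Pairwise (· < ·)) {i : ℕ}
    (hi : i ∈ I) : i ≤ I.getLastI := by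
  induction I with
  | nil => simp at hi
  | cons a I ih =>
    rcases eq_or_ne I [] with rfl | hI
    · exact (List.mem_singleton.1 hi).le
    · rw [List.getLastI_cons a hI]
      rcases List.mem_cons.1 hi with rfl | hi
      · exact ((List.pairwise_cons.1 hs).1 _ (List.getLastI_mem hI)).le
      · exact ih (List.pairwise_cons.1 hs).2 hi

theorem length_le_of_pairwise_lt {l : List ℕ} {a m : ℕ} (hs : l.Pairwise (· < ·))
    (h : ∀ i ∈ l, a ≤ i ∧ i < a + m) : l.length ≤ m := by
  rw [← List.toFinset_card_of_nodup (hs.imp ne_of_lt)]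
  calc l.toFinset.card ≤ (Finset.Ico a (a + m)).card :=
        Finset.card_le_card fun i hi => by simpa using h i (List.mem_toFinset.1 hi)
    _ = m := by simp

theorem lt_of_pairwise_cons_of_ne {k i : ℕ} {I : List ℕ} (hs : (i :: I).Pairwise (· < ·))
    (hki : k ≤ i) (hik : i ≠ k) : ∀ j ∈ i :: I, k < j := by
  intro j hj
  rcases List.mem_cons.1 hj with rfl | hj
  · omega
  · exact lt_of_le_of_lt hki ((List.pairwise_cons.1 hs).1 j hj)

/-- Insert the letter `M` into `xs` so that it occupies the positions `I`, counting from `k`;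
only meaningful when `I` is strictly increasing and fits, see `posOf_place_and_filter_place`. -/
def place (M : ℕ) : ℕ → List ℕ → List ℕ → List ℕ
  | _, [], xs => xs
  | k, i :: I, xs =>
    if i = k then M :: place M (k + 1) I xs
    else
      match xs with
      | [] => []
      | a :: xs' => a :: place M (k + 1) (i :: I) xs'
  termination_by _ I xs => I.length + xs.length

def posOf (M : ℕ) : ℕ → List ℕ → List ℕ
  | _, [] => []
  | k, a :: s => if a = M then k :: posOf M (k + 1) s else posOf M (k + 1) s

section Place

variable {M k : ℕ}

@[simp] theorem place_nil_left (xs : List ℕ) : place M k [] xs = xs := by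
  unfold place; rfl

theorem place_cons_self (I xs : List ℕ) : place M k (k :: I) xs = M :: place M (k + 1) I xs := by
  conv_lhs => unfold place
  simp

theorem place_cons_cons {i : ℕ} (hi : i ≠ k) (I : List ℕ) (a : ℕ) (xs : List ℕ) :
    place M k (i :: I) (a :: xs) = a :: place M (k + 1) (i :: I) xs := by
  conv_lhs => unfold place
  simp [hi]

@[simp] theorem posOf_nil : posOf M k [] = [] := rfl

theorem posOf_cons (a : ℕ) (s : List ℕ) :
    posOf M k (a :: s) = if a = M then k :: posOf M (k + 1) s else posOf M (k + 1) s := rfl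

theorem bounds_of_mem_posOf {s : List ℕ} {i : ℕ} (h : i ∈ posOf M k s) :
    k ≤ i ∧ i < k + s.length := by
  induction s generalizing k with
  | nil => simp at h
  | cons a s ih =>
    rw [posOf_cons] at h
    split_ifs at h
    · rcases List.mem_cons.1 h with rfl | h
      · simp
      · have := ih h; rw [List.length_cons]; omega
    · have := ih h; rw [List.length_cons]; omega

theorem pairwise_posOf (s : List ℕ) : (posOf M k s).Pairwise (· < ·) := by
  induction s generalizing k with
  | nil => simp
  | cons a s ih =>
    rw [posOf_cons]
    split_ifs
    · exact List.pairwise_cons.2 ⟨fun i hi => (bounds_of_mem_posOf hi).1, ih⟩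
    · exact ih

theorem posOf_eq_nil_iff {s : List ℕ} : posOf M k s = [] ↔ M ∉ s := by
  induction s generalizing k with
  | nil => simp
  | cons a s ih =>
    rw [posOf_cons]
    split_ifs with h
    · simp [h]
    · simp [ih, Ne.symm h]

theorem length_posOf_add_length_filter (s : List ℕ) :
    (posOf M k s).length + (s.filter (· ≠ M)).length = s.length := by
  induction s generalizing k with
  | nil => simp
  | cons a s ih =>
    have := @ih (k + 1)
    by_cases h : a = M <;> simp [posOf_cons, h] at this ⊢ <;> omega

theorem posOf_eq_range' {s : List ℕ} (h : ∀ a ∈ s, a = M) :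
    posOf M k s = List.range' k s.length := by
  induction s generalizing k with
  | nil => simp
  | cons a s ih =>
    rw [posOf_cons, if_pos (h a (by simp)), List.length_cons, List.range'_succ,
      ih fun x hx => h x (List.mem_cons_of_mem _ hx)]

theorem mem_take_iff_exists_posOf {s : List ℕ} {g : ℕ} :
    M ∈ s.take g ↔ ∃ i ∈ posOf M k s, i < k + g := by
  induction s generalizing k g with
  | nil => simp
  | cons a s ih =>
    cases g with
    | zero => simpa using fun i hi => (bounds_of_mem_posOf hi).1
    | succ g =>
      rw [List.take_succ_cons, posOf_cons]
      split_ifs with h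
      · simp [h]
      · simp only [List.mem_cons, Ne.symm h, false_or, @ih (k + 1) g]
        exact exists_congr fun i => and_congr_right fun _ => by omega

theorem mem_drop_iff_exists_posOf {s : List ℕ} {g : ℕ} :
    M ∈ s.drop g ↔ ∃ i ∈ posOf M k s, k + g ≤ i := by
  induction s generalizing k g with
  | nil => simp
  | cons a s ih =>
    cases g with
    | zero =>
      rw [List.drop_zero, ← not_not (a := M ∈ a :: s), ← posOf_eq_nil_iff (k := k)]
      refine ⟨fun h => ?_, fun ⟨i, hi, _⟩ h => by simp [h] at hi⟩
      obtain ⟨i, hi⟩ := List.exists_mem_of_ne_nil _ h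
      exact ⟨i, hi, by simpa using (bounds_of_mem_posOf hi).1⟩
    | succ g =>
      rw [List.drop_succ_cons, @ih (k + 1) g, posOf_cons]
      split_ifs
      · simp only [List.mem_cons, exists_eq_or_imp]
        constructor
        · rintro ⟨i, hi, hle⟩; exact .inr ⟨i, hi, by omega⟩
        · rintro (h | ⟨i, hi, hle⟩)
          · omega
          · exact ⟨i, hi, by omega⟩
      · exact exists_congr fun i => and_congr_right fun _ => by omega

theorem place_posOf (s : List ℕ) : place M k (posOf M k s) (s.filter (· ≠ M)) = s := by
  induction s generalizing k with
  | nil => simp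
  | cons a s ih =>
    rw [posOf_cons]
    by_cases h : a = M
    · subst h
      rw [if_pos rfl, List.filter_cons_of_neg (by simp), place_cons_self, ih]
    · rw [if_neg h, List.filter_cons_of_pos (by simpa using h)]
      rcases hI : posOf M (k + 1) s with _ | ⟨i, I⟩
      · have hs : s.filter (· ≠ M) = s :=
          List.filter_eq_self.2 fun b hb => by
            simpa using fun hbM : b = M => posOf_eq_nil_iff.1 hI (hbM ▸ hb)
        rw [place_nil_left, hs]
      · have hik : i ≠ k := by
          have := (bounds_of_mem_posOf (hI ▸ List.mem_cons_self : i ∈ posOf M (k + 1) s)).1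
          omega
        rw [place_cons_cons hik, ← hI, ih]

theorem posOf_place_and_filter_place {I xs : List ℕ} (hs : I.Pairwise (· < ·))
    (hI : ∀ i ∈ I, k ≤ i ∧ i < k + I.length + xs.length) (hM : M ∉ xs) :
    posOf M k (place M k I xs) = I ∧ (place M k I xs).filter (· ≠ M) = xs := by
  induction k, I, xs using place.induct with
  | case1 k xs =>
    simp only [place_nil_left, posOf_eq_nil_iff, List.filter_eq_self]
    exact ⟨hM, fun a ha => by simpa using fun h : a = M => hM (h ▸ ha)⟩
  | case2 k I xs ih =>
    obtain ⟨hk, hs⟩ := List.pairwise_cons.1 hs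
    have hI' : ∀ i ∈ I, k + 1 ≤ i ∧ i < k + 1 + I.length + xs.length := fun i hi => by
      have := (hI i (List.mem_cons_of_mem _ hi)).2
      rw [List.length_cons] at this
      exact ⟨hk i hi, by omega⟩
    obtain ⟨h1, h2⟩ := ih hs hI' hM
    rw [place_cons_self, posOf_cons, if_pos rfl, h1, List.filter_cons_of_neg (by simp), h2]
    exact ⟨rfl, rfl⟩
  | case3 k i I hik =>
    have hgt := lt_of_pairwise_cons_of_ne hs (hI i (by simp)).1 hik
    have := length_le_of_pairwise_lt hs (a := k + 1) (m := I.length) fun j hj => by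
      have := (hI j hj).2
      rw [List.length_cons, List.length_nil] at this
      exact ⟨hgt j hj, by omega⟩
    rw [List.length_cons] at this
    omega
  | case4 k i I hik a xs ih =>
    have haM : a ≠ M := fun h => hM (h ▸ List.mem_cons_self)
    have hgt := lt_of_pairwise_cons_of_ne hs (hI i (by simp)).1 hik
    have hI' : ∀ j ∈ i :: I, k + 1 ≤ j ∧ j < k + 1 + (i :: I).length + xs.length :=
      fun j hj => by
      have := (hI j hj).2
      simp only [List.length_cons] at this ⊢
      exact ⟨hgt j hj, by omega⟩
    obtain ⟨h1, h2⟩ := ih hs hI' fun h => hM (List.mem_cons_of_mem _ h)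
    rw [place_cons_cons hik, posOf_cons, if_neg haM, h1, List.filter_cons_of_pos (by simpa), h2]
    exact ⟨rfl, rfl⟩

theorem mem_place_iff {I xs : List ℕ} (hs : I.Pairwise (· < ·))
    (hI : ∀ i ∈ I, k ≤ i ∧ i < k + I.length + xs.length) (hM : M ∉ xs) (hne : I ≠ [])
    {x : ℕ} : x ∈ place M k I xs ↔ x = M ∨ x ∈ xs := by
  obtain ⟨hpos, hfil⟩ := posOf_place_and_filter_place hs hI hM
  constructor
  · intro hx
    by_cases hxM : x = M
    · exact .inl hxM
    · exact .inr (hfil ▸ List.mem_filter.2 ⟨hx, by simpa⟩)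
  · rintro (rfl | hx)
    · by_contra h
      exact hne (hpos ▸ posOf_eq_nil_iff.2 h)
    · rw [← hfil] at hx
      exact (List.mem_filter.1 hx).1

theorem length_place {I xs : List ℕ} (hs : I.Pairwise (· < ·))
    (hI : ∀ i ∈ I, k ≤ i ∧ i < k + I.length + xs.length) (hM : M ∉ xs) :
    (place M k I xs).length = I.length + xs.length := by
  obtain ⟨hpos, hfil⟩ := posOf_place_and_filter_place hs hI hM
  rw [← length_posOf_add_length_filter (M := M) (k := k), hpos, hfil]

end Place

mutual
  def treeWord : LTree → List ℕ
    | .node I fl fr =>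
      (forestWord fl).map (· + wmax (forestWord fr)) ++
        place (wmax (forestWord fr) + wmax (forestWord fl) + 1) 1 I (forestWord fr)
  def forestWord : List LTree → List ℕ
    | [] => []
    | t :: ts => shiftAppend (treeWord t) (forestWord ts)
end

theorem treeWord_node (I : List ℕ) (fl fr : List LTree) :
    treeWord (.node I fl fr) =
      (forestWord fl).map (· + wmax (forestWord fr)) ++
        place (wmax (forestWord fr) + wmax (forestWord fl) + 1) 1 I (forestWord fr) := by
  rw [treeWord]

@[simp] theorem forestWord_nil : forestWord [] = [] := by rw [forestWord]

theorem forestWord_cons (t : LTree) (ts : List LTree) :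
    forestWord (t :: ts) = shiftAppend (treeWord t) (forestWord ts) := by
  rw [forestWord]

theorem weight_node (I : List ℕ) (fl fr : List LTree) :
    (LTree.node I fl fr).weight = I.length + forestWeight fl + forestWeight fr := rfl

@[simp] theorem forestWeight_nil : forestWeight [] = 0 := rfl

theorem forestWeight_cons (t : LTree) (ts : List LTree) :
    forestWeight (t :: ts) = t.weight + forestWeight ts := rfl

theorem weight_le_forestWeight {t : LTree} {f : List LTree} (h : t ∈ f) :
    t.weight ≤ forestWeight f := by
  induction f with
  | nil => simp at h
  | cons s f ih =>
    rw [forestWeight_cons]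
    rcases List.mem_cons.1 h with rfl | h
    · omega
    · have := ih h; omega

theorem IsPT.weight_pos {t : LTree} (h : IsPT t) : 0 < t.weight := by
  obtain ⟨I, fl, fr, hne, -⟩ := h
  rw [weight_node]
  have := List.length_pos_iff.2 hne
  omega

theorem forestWeight_pos {f : List LTree} (hf : ∀ t ∈ f, IsPT t) (hne : f ≠ []) :
    0 < forestWeight f := by
  obtain ⟨t, ht⟩ := List.exists_mem_of_ne_nil f hne
  exact lt_of_lt_of_le (hf t ht).weight_pos (weight_le_forestWeight ht)

theorem IsPT.label_bounds {I : List ℕ} {fl fr : List LTree} (h : IsPT (.node I fl fr)) :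
    ∀ i ∈ I, 1 ≤ i ∧ i < 1 + I.length + forestWeight fr := by
  obtain ⟨_, _, _, hne, hs, hpos, hrange, hcond, -⟩ := h
  intro i hi
  refine ⟨hpos i hi, ?_⟩
  rcases eq_or_ne fr [] with rfl | hfr
  · have := List.mem_range'_1.1 (hrange rfl ▸ hi)
    rw [forestWeight_nil]
    omega
  · have hlast := (hcond hfr).2.2.1
    have := le_getLastI_of_pairwise hs hi
    rw [rightWeight] at hlast
    omega

theorem IsPT.left {I : List ℕ} {fl fr : List LTree} (h : IsPT (.node I fl fr)) :
    ∀ t ∈ fl, IsPT t := by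
  cases h; assumption

theorem IsPT.right {I : List ℕ} {fl fr : List LTree} (h : IsPT (.node I fl fr)) :
    ∀ t ∈ fr, IsPT t := by
  cases h; assumption

theorem IsPT.pairwise {I : List ℕ} {fl fr : List LTree} (h : IsPT (.node I fl fr)) :
    I.Pairwise (· < ·) := by
  cases h; assumption

theorem IsPT.label_ne_nil {I : List ℕ} {fl fr : List LTree} (h : IsPT (.node I fl fr)) :
    I ≠ [] := by
  cases h; assumption

theorem IsPT.eq_range' {I : List ℕ} {fl fr : List LTree} (h : IsPT (.node I fl fr))
    (hfr : fr = []) : I = List.range' 1 I.length := by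
  cases h with | mk _ _ _ _ _ _ hrange _ _ _ => exact hrange hfr

theorem IsPT.headI_le {I : List ℕ} {fl fr : List LTree} (h : IsPT (.node I fl fr))
    (hfr : fr ≠ []) : I.headI ≤ fr.headI.weight := by
  cases h with | mk _ _ _ _ _ _ _ hcond _ _ => exact (hcond hfr).2.1

theorem IsPT.weight_getLastI_ge {I : List ℕ} {fl fr : List LTree} (h : IsPT (.node I fl fr))
    (hfr : fr ≠ []) : I.length + forestWeight fr + 1 - I.getLastI ≤ fr.getLastI.weight := by
  cases h with | mk _ _ _ _ _ _ _ hcond _ _ => exact (hcond hfr).2.2.2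

theorem length_forestWord_of_forall {f : List LTree}
    (h : ∀ t ∈ f, (treeWord t).length = t.weight) : (forestWord f).length = forestWeight f := by
  induction f with
  | nil => rfl
  | cons t ts ih =>
    rw [forestWord_cons, shiftAppend, List.length_append, List.length_map, h t (by simp),
      ih fun u hu => h u (List.mem_cons_of_mem _ hu), forestWeight_cons]

theorem length_treeWord {t : LTree} (h : IsPT t) : (treeWord t).length = t.weight := by
  induction h with
  | mk I fl fr hne hs hpos hrange hcond hfl hfr ihl ihr =>
    have hI := (IsPT.mk I fl fr hne hs hpos hrange hcond hfl hfr).label_bounds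
    rw [← length_forestWord_of_forall ihr] at hI
    rw [treeWord_node, List.length_append, List.length_map,
      length_place hs hI (wmax_add_add_one_not_mem _ _), length_forestWord_of_forall ihl,
      length_forestWord_of_forall ihr, weight_node]
    omega

theorem length_forestWord {f : List LTree} (hf : ∀ t ∈ f, IsPT t) :
    (forestWord f).length = forestWeight f :=
  length_forestWord_of_forall fun t ht => length_treeWord (hf t ht)

theorem forestWord_ne_nil {f : List LTree} (hf : ∀ t ∈ f, IsPT t) (hne : f ≠ []) :
    forestWord f ≠ [] := fun h =>
  (forestWeight_pos hf hne).ne' (by rw [← length_forestWord hf, h, List.length_nil])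

theorem IsPT.placeable {I : List ℕ} {fl fr : List LTree} (h : IsPT (.node I fl fr)) :
    ∀ i ∈ I, 1 ≤ i ∧ i < 1 + I.length + (forestWord fr).length := by
  rw [length_forestWord h.right]; exact h.label_bounds

theorem mem_treeWord_node {I : List ℕ} {fl fr : List LTree} (h : IsPT (.node I fl fr)) {x : ℕ} :
    x ∈ treeWord (.node I fl fr) ↔
      x ∈ shiftAppend (shiftAppend [1] (forestWord fl)) (forestWord fr) := by
  rw [treeWord_node, List.mem_append, mem_place_iff h.pairwise h.placeable
    (wmax_add_add_one_not_mem _ _) h.label_ne_nil]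
  simp only [shiftAppend, List.map_cons, List.map_nil, List.cons_append, List.nil_append,
    List.mem_cons, List.mem_append, List.mem_map]
  grind

theorem isPacked_forestWord_of_forall {f : List LTree} (h : ∀ t ∈ f, IsPacked (treeWord t)) :
    IsPacked (forestWord f) := by
  induction f with
  | nil => exact ⟨by simp, fun i hi hle => absurd hle (by rw [forestWord_nil, wmax_nil]; omega)⟩
  | cons t ts ih =>
    rw [forestWord_cons]
    exact (h t (by simp)).shiftAppend (ih fun u hu => h u (List.mem_cons_of_mem _ hu))

theorem isPacked_treeWord {t : LTree} (h : IsPT t) : IsPacked (treeWord t) := by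
  induction h with
  | mk I fl fr hne hs hpos hrange hcond hfl hfr ihl ihr =>
    have hone : IsPacked [1] :=
      ⟨by simp, fun i _ hle => List.mem_singleton.2 (by rw [wmax_cons, wmax_nil] at hle; omega)⟩
    have h := IsPT.mk I fl fr hne hs hpos hrange hcond hfl hfr
    refine isPacked_congr (fun x => (mem_treeWord_node h).symm) ?_
    exact (hone.shiftAppend (isPacked_forestWord_of_forall ihl)).shiftAppend
      (isPacked_forestWord_of_forall ihr)

theorem isPacked_forestWord {f : List LTree} (hf : ∀ t ∈ f, IsPT t) :
    IsPacked (forestWord f) :=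
  isPacked_forestWord_of_forall fun t ht => isPacked_treeWord (hf t ht)

theorem wmax_treeWord_node {I : List ℕ} {fl fr : List LTree} (h : IsPT (.node I fl fr)) :
    wmax (treeWord (.node I fl fr)) = wmax (forestWord fr) + wmax (forestWord fl) + 1 := by
  rw [wmax_congr fun x => mem_treeWord_node h, wmax_shiftAppend, wmax_shiftAppend, wmax_cons,
    wmax_nil]
  omega

theorem filter_treeWord_node {I : List ℕ} {fl fr : List LTree} (h : IsPT (.node I fl fr)) :
    (treeWord (.node I fl fr)).filter (· ≠ wmax (treeWord (.node I fl fr))) =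
      shiftAppend (forestWord fl) (forestWord fr) := by
  rw [wmax_treeWord_node h, treeWord_node, List.filter_append,
    (posOf_place_and_filter_place h.pairwise h.placeable (wmax_add_add_one_not_mem _ _)).2,
    shiftAppend, List.filter_eq_self.2]
  intro x hx
  obtain ⟨a, ha, rfl⟩ := List.mem_map.1 hx
  have := le_wmax_of_mem ha
  exact decide_eq_true (by omega)

theorem isSplit_forestWord_weight_head {t : LTree} {ts : List LTree} (ht : IsPT t) :
    IsSplit (forestWord (t :: ts)) t.weight := by
  rw [forestWord_cons, ← length_treeWord ht]
  exact isSplit_shiftAppend (isPacked_treeWord ht)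

theorem not_isSplit_forestWord_of_lt_weight_head {t : LTree} {ts : List LTree} (ht : IsPT t)
    (hind : Indecomposable (treeWord t)) {r : ℕ} (hr : 0 < r) (hrt : r < t.weight) :
    ¬IsSplit (forestWord (t :: ts)) r := by
  rw [forestWord_cons]
  exact hind.not_isSplit_shiftAppend hr (by rwa [length_treeWord ht])

theorem isSplit_forestWord_sub_weight_last {f : List LTree} (hf : ∀ t ∈ f, IsPT t)
    (hne : f ≠ []) : IsSplit (forestWord f) (forestWeight f - f.getLastI.weight) := by
  induction f with
  | nil => exact absurd rfl hne
  | cons t ts ih =>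
    rcases eq_or_ne ts [] with rfl | hts
    · simp [IsSplit, forestWeight_cons, List.getLastI]
    · have hts' : ∀ u ∈ ts, IsPT u := fun u hu => hf u (List.mem_cons_of_mem _ hu)
      have hlast := weight_le_forestWeight (List.getLastI_mem hts)
      have := isSplit_shiftAppend (v := forestWord ts) (isPacked_treeWord (hf t (by simp)))
      rw [shiftAppend, ← List.length_map (f := (· + wmax (forestWord ts))),
        isSplit_append_length] at this
      have key := (ih hts' hts).append_right fun b hb a ha => this b (List.drop_subset _ _ hb) a ha
      rwa [List.length_map, length_treeWord (hf t (by simp)), ← shiftAppend, ← forestWord_cons,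
        ← Nat.add_sub_assoc hlast, ← forestWeight_cons, ← List.getLastI_cons t hts] at key

theorem not_isSplit_forestWord_of_weight_last_lt {f : List LTree} (hf : ∀ t ∈ f, IsPT t)
    (hind : ∀ t ∈ f, Indecomposable (treeWord t)) (hne : f ≠ []) {r : ℕ}
    (hr : forestWeight f - f.getLastI.weight < r) (hrf : r < forestWeight f) :
    ¬IsSplit (forestWord f) r := by
  induction f generalizing r with
  | nil => exact absurd rfl hne
  | cons t ts ih =>
    rcases eq_or_ne ts [] with rfl | hts
    · simp only [forestWeight_cons, forestWeight_nil, List.getLastI] at hr hrf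
      exact not_isSplit_forestWord_of_lt_weight_head (hf t (by simp)) (hind t (by simp))
        (by omega) (by omega)
    · rw [List.getLastI_cons t hts, forestWeight_cons] at hr
      rw [forestWeight_cons] at hrf
      have hlast := weight_le_forestWeight (List.getLastI_mem hts)
      intro hsplit
      refine ih (fun u hu => hf u (List.mem_cons_of_mem _ hu))
        (fun u hu => hind u (List.mem_cons_of_mem _ hu)) hts (r := r - t.weight) (by omega)
        (by omega) (IsSplit.of_append_right (A := (treeWord t).map (· + wmax (forestWord ts))) ?_)
      rwa [List.length_map, length_treeWord (hf t (by simp)), Nat.add_sub_cancel' (by omega),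
        ← shiftAppend, ← forestWord_cons]

theorem IsSplit.wmax_not_mem_drop {w : List ℕ} {j : ℕ} (h : IsSplit w j) (hj : 0 < j) :
    wmax w ∉ w.drop j := by
  intro hM
  have hw : w ≠ [] := List.ne_nil_of_mem (List.mem_of_mem_drop hM)
  obtain ⟨a, ha⟩ := List.exists_mem_of_ne_nil _ (by simpa [hw] using hj.ne' : w.take j ≠ [])
  exact absurd (h _ hM a ha) (not_lt.2 (le_wmax_of_mem (List.mem_of_mem_take ha)))

theorem IsSplit.exists_of_wmax_mem_right {A s : List ℕ} {M j : ℕ} (h : IsSplit (A ++ s) j)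
    (hj : 0 < j) (hMw : wmax (A ++ s) = M) (hMs : M ∈ s) :
    ∃ j', j = A.length + j' ∧ (∀ i ∈ posOf M 1 s, i ≤ j') ∧
      IsSplit (s.filter (· ≠ M)) ((s.filter (· ≠ M)).length - (s.length - j')) := by
  have hMdrop := h.wmax_not_mem_drop hj
  rw [hMw] at hMdrop
  obtain ⟨j', rfl⟩ : ∃ j', j = A.length + j' := by
    refine Nat.exists_eq_add_of_le (not_lt.1 fun hj => hMdrop ?_)
    rw [List.drop_append_of_le_length hj.le]
    exact List.mem_append_right _ hMs
  rw [List.drop_length_add_append] at hMdrop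
  refine ⟨j', rfl, fun i hi => not_lt.1 fun hlt => hMdrop ?_, ?_⟩
  · exact mem_drop_iff_exists_posOf.2 ⟨i, hi, by omega⟩
  · refine (isSplit_iff_isSplit_filter_ne (fun x hx => ?_) hMdrop).1 h.of_append_right
    exact hMw ▸ le_wmax_of_mem (List.mem_append_right _ hx)

theorem indecomposable_treeWord_node {I : List ℕ} {fl fr : List LTree}
    (h : IsPT (.node I fl fr)) (hind : ∀ t ∈ fr, Indecomposable (treeWord t)) :
    Indecomposable (treeWord (.node I fl fr)) := by
  have hxsM := wmax_add_add_one_not_mem (forestWord fr) (wmax (forestWord fl))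
  obtain ⟨hpos, hfil⟩ := posOf_place_and_filter_place h.pairwise h.placeable hxsM
  have hslen := length_place h.pairwise h.placeable hxsM
  have hMw := wmax_treeWord_node h
  intro j hj0 hju hsplit
  rw [treeWord_node] at hsplit hMw hju
  obtain ⟨j', rfl, hIj, hxs⟩ := hsplit.exists_of_wmax_mem_right hj0 hMw
    ((mem_place_iff h.pairwise h.placeable hxsM h.label_ne_nil).2 (.inl rfl))
  rw [hpos] at hIj
  rw [hfil, hslen, length_forestWord h.right] at hxs
  rw [List.length_append, hslen, length_forestWord h.right] at hju
  have hIlen : I.length ≤ j' :=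
    length_le_of_pairwise_lt h.pairwise fun i hi =>
      ⟨(h.label_bounds i hi).1, by have := hIj i hi; omega⟩
  have hfr : fr ≠ [] := by rintro rfl; rw [forestWeight_nil] at hju; omega
  have := h.weight_getLastI_ge hfr
  have := hIj _ (List.getLastI_mem h.label_ne_nil)
  have := weight_le_forestWeight (List.getLastI_mem hfr)
  exact not_isSplit_forestWord_of_weight_last_lt h.right hind hfr (by omega) (by omega) hxs

theorem indecomposable_treeWord {t : LTree} (h : IsPT t) : Indecomposable (treeWord t) := by
  induction h with
  | mk I fl fr hne hs hpos hrange hcond hfl hfr _ ihr =>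
    exact indecomposable_treeWord_node (.mk I fl fr hne hs hpos hrange hcond hfl hfr) ihr

theorem shiftAppend_inj {u u' v v' : List ℕ} (hlen : u.length = u'.length)
    (h : shiftAppend u v = shiftAppend u' v') : u = u' ∧ v = v' := by
  obtain ⟨hu, rfl⟩ := List.append_inj h (by simpa using hlen)
  exact ⟨List.map_injective_iff.2 (add_left_injective _) hu, rfl⟩

theorem forestWord_inj_of_forall {f g : List LTree} (hf : ∀ t ∈ f, IsPT t)
    (hg : ∀ t ∈ g, IsPT t)
    (hinj : ∀ t ∈ f, ∀ t', IsPT t' → treeWord t = treeWord t' → t = t')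
    (heq : forestWord f = forestWord g) : f = g := by
  induction f generalizing g with
  | nil =>
    rcases g with _ | ⟨t', ts'⟩
    · rfl
    · exact absurd heq.symm (forestWord_ne_nil hg (List.cons_ne_nil _ _))
  | cons t ts ih =>
    rcases g with _ | ⟨t', ts'⟩
    · exact absurd heq (forestWord_ne_nil hf (List.cons_ne_nil _ _))
    · have ht := hf t (by simp)
      have ht' := hg t' (by simp)
      have hw : t.weight = t'.weight := by
        refine le_antisymm (not_lt.1 fun hlt => ?_) (not_lt.1 fun hlt => ?_)
        · exact not_isSplit_forestWord_of_lt_weight_head ht (indecomposable_treeWord ht)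
            ht'.weight_pos hlt (heq ▸ isSplit_forestWord_weight_head ht')
        · exact not_isSplit_forestWord_of_lt_weight_head ht' (indecomposable_treeWord ht')
            ht.weight_pos hlt (heq ▸ isSplit_forestWord_weight_head ht)
      rw [forestWord_cons, forestWord_cons] at heq
      obtain ⟨htt, hts⟩ :=
        shiftAppend_inj (by rw [length_treeWord ht, length_treeWord ht', hw]) heq
      rw [hinj t (by simp) t' ht' htt, ih (fun u hu => hf u (List.mem_cons_of_mem _ hu))
        (fun u hu => hg u (List.mem_cons_of_mem _ hu))
        (fun u hu => hinj u (List.mem_cons_of_mem _ hu)) hts]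

/-- In the word of a packed tree `Node(I, f_ℓ, f_r)` the largest `l` with `IsLeftCut` is the
weight of `f_ℓ`. -/
def IsLeftCut (u : List ℕ) (l : ℕ) : Prop :=
  wmax u ∉ u.take l ∧ IsSplit (u.filter (· ≠ wmax u)) l

theorem isLeftCut_treeWord_node {I : List ℕ} {fl fr : List LTree} (h : IsPT (.node I fl fr)) :
    IsLeftCut (treeWord (.node I fl fr)) (forestWeight fl) := by
  have hls := length_forestWord h.left
  refine ⟨?_, ?_⟩
  · rw [wmax_treeWord_node h, treeWord_node, List.take_left' (by simpa using hls)]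
    intro hM
    obtain ⟨a, ha, hae⟩ := List.mem_map.1 hM
    have := le_wmax_of_mem ha
    omega
  · rw [filter_treeWord_node h, ← hls]
    exact isSplit_shiftAppend (isPacked_forestWord h.left)

theorem not_isLeftCut_treeWord_node {I : List ℕ} {fl fr : List LTree} (h : IsPT (.node I fl fr))
    {m : ℕ} (hm : forestWeight fl < m) : ¬IsLeftCut (treeWord (.node I fl fr)) m := by
  obtain ⟨g, rfl⟩ := Nat.exists_eq_add_of_le hm.le
  have hlen : ((forestWord fl).map (· + wmax (forestWord fr))).length = forestWeight fl := by
    rw [List.length_map, length_forestWord h.left]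
  have hxsM := wmax_add_add_one_not_mem (forestWord fr) (wmax (forestWord fl))
  rintro ⟨hMtake, hsplit⟩
  rw [wmax_treeWord_node h, treeWord_node, ← hlen, List.take_length_add_append,
    List.mem_append, not_or, mem_take_iff_exists_posOf,
    (posOf_place_and_filter_place h.pairwise h.placeable hxsM).1] at hMtake
  have hIg : ∀ i ∈ I, g < i := fun i hi => not_le.1 fun hle => hMtake.2 ⟨i, hi, by omega⟩
  rw [filter_treeWord_node h, shiftAppend, ← hlen] at hsplit
  rcases fr with _ | ⟨t0, ts0⟩
  · have := hIg 1 (by rw [h.eq_range' rfl]; simpa using List.length_pos_iff.2 h.label_ne_nil)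
    omega
  · have ht0 := h.right t0 (by simp)
    have hhead : I.headI ≤ t0.weight := h.headI_le (List.cons_ne_nil _ _)
    have := hIg _ (List.headI_mem h.label_ne_nil)
    exact not_isSplit_forestWord_of_lt_weight_head ht0 (indecomposable_treeWord ht0)
      (by omega) (by omega) hsplit.of_append_right

theorem forestWeight_left_eq_of_treeWord_eq {I I' : List ℕ} {fl fr fl' fr' : List LTree}
    (h : IsPT (.node I fl fr)) (h' : IsPT (.node I' fl' fr'))
    (heq : treeWord (.node I fl fr) = treeWord (.node I' fl' fr')) :
    forestWeight fl = forestWeight fl' := by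
  refine le_antisymm (not_lt.1 fun hlt => ?_) (not_lt.1 fun hlt => ?_)
  · exact not_isLeftCut_treeWord_node h' hlt (heq ▸ isLeftCut_treeWord_node h)
  · exact not_isLeftCut_treeWord_node h hlt (heq ▸ isLeftCut_treeWord_node h')

theorem treeWord_inj {t t' : LTree} (h : IsPT t) (h' : IsPT t')
    (heq : treeWord t = treeWord t') : t = t' := by
  induction h generalizing t' with
  | mk I fl fr hne hs hpos hrange hcond hfl hfr ihl ihr =>
    obtain ⟨I', fl', fr'⟩ := t'
    have h := IsPT.mk I fl fr hne hs hpos hrange hcond hfl hfr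
    have hM := wmax_treeWord_node h
    rw [heq, wmax_treeWord_node h'] at hM
    have hw := forestWeight_left_eq_of_treeWord_eq h h' heq
    rw [treeWord_node, treeWord_node] at heq
    obtain ⟨hA, hplace⟩ := List.append_inj heq
      (by simp only [List.length_map, length_forestWord h.left, length_forestWord h'.left, hw])
    obtain ⟨hI, hxs⟩ := posOf_place_and_filter_place h.pairwise h.placeable
      (wmax_add_add_one_not_mem (forestWord fr) (wmax (forestWord fl)))
    obtain ⟨hI', hxs'⟩ := posOf_place_and_filter_place h'.pairwise h'.placeable
      (wmax_add_add_one_not_mem (forestWord fr') (wmax (forestWord fl')))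
    rw [hplace, ← hM, hI'] at hI
    rw [hplace, ← hM, hxs'] at hxs
    rw [← hxs] at hA
    have hls := List.map_injective_iff.2 (add_left_injective _) hA
    rw [forestWord_inj_of_forall h.left h'.left ihl hls,
      forestWord_inj_of_forall h.right h'.right ihr hxs.symm, hI]

theorem exists_indecomposable_shiftAppend_eq {w : List ℕ} (hw : IsPacked w) (hne : w ≠ []) :
    ∃ u R, IsPacked u ∧ IsPacked R ∧ Indecomposable u ∧ u ≠ [] ∧
      shiftAppend u R = w := by
  classical
  have hwpos := List.length_pos_iff.2 hne
  have hex : ∃ q, 0 < q ∧ IsSplit w q := ⟨w.length, hwpos, isSplit_of_length_le le_rfl⟩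
  obtain ⟨q, ⟨hq0, hq⟩, hmin⟩ :
      ∃ q, (0 < q ∧ IsSplit w q) ∧ ∀ r < q, ¬(0 < r ∧ IsSplit w r) :=
    ⟨Nat.find hex, Nat.find_spec hex, fun r => Nat.find_min hex⟩
  have hqw : q ≤ w.length :=
    not_lt.1 fun h => hmin _ h ⟨hwpos, isSplit_of_length_le le_rfl⟩
  rw [← List.take_append_drop q w] at hw hq hmin ⊢
  set B := w.take q
  set R := w.drop q
  have hBlen : B.length = q := List.length_take_of_le hqw
  rw [← hBlen, isSplit_append_length] at hq
  have hsa := shiftAppend_map_sub (hw.wmax_lt_of_append hq)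
  have hmap : (B.map (· - wmax R)).map (· + wmax R) = B := (List.append_inj hsa (by simp)).1
  refine ⟨_, R, hw.left_of_append hq, hw.right_of_append hq, fun r hr hru hsplit => ?_,
    by simp [← List.length_pos_iff, hBlen, hq0], hsa⟩
  rw [← isSplit_map_add (wmax R), hmap] at hsplit
  rw [List.length_map, hBlen] at hru
  exact hmin r hru ⟨hr, hsplit.append_left (by omega) hq⟩

section LeftCut

variable {L s : List ℕ}

theorem IsLeftCut.wmax_not_mem_left (h : IsLeftCut (L ++ s) L.length) : wmax (L ++ s) ∉ L := by
  simpa using h.1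

theorem IsLeftCut.filter_eq (h : IsLeftCut (L ++ s) L.length) :
    (L ++ s).filter (· ≠ wmax (L ++ s)) = L ++ s.filter (· ≠ wmax (L ++ s)) := by
  rw [List.filter_append, List.filter_eq_self.2 fun a ha => by
    simpa using fun haM : a = wmax (L ++ s) => h.wmax_not_mem_left (haM ▸ ha)]

theorem IsLeftCut.lt (h : IsLeftCut (L ++ s) L.length) :
    ∀ b ∈ s.filter (· ≠ wmax (L ++ s)), ∀ a ∈ L, b < a := by
  have := h.2
  rwa [h.filter_eq, isSplit_append_length] at this

theorem headI_posOf_le_of_isLeftCut {t0 : LTree} {ts0 : List LTree}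
    (hf : ∀ t ∈ t0 :: ts0, IsPT t)
    (hxs : forestWord (t0 :: ts0) = s.filter (· ≠ wmax (L ++ s)))
    (hcut : IsLeftCut (L ++ s) L.length)
    (hmax : ∀ m, L.length < m → m ≤ (L ++ s).length → ¬IsLeftCut (L ++ s) m) :
    (posOf (wmax (L ++ s)) 1 s).headI ≤ t0.weight := by
  have ht0 := hf t0 (by simp)
  by_contra! hlt
  have hg : t0.weight ≤ s.length := by
    have := List.length_filter_le (· ≠ wmax (L ++ s)) s
    rw [← hxs, length_forestWord hf, forestWeight_cons] at this
    omega
  refine hmax (L.length + t0.weight) (by have := ht0.weight_pos; omega)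
    (by rw [List.length_append]; omega) ⟨?_, ?_⟩
  · rw [List.take_length_add_append, List.mem_append, not_or, mem_take_iff_exists_posOf (k := 1)]
    refine ⟨hcut.wmax_not_mem_left, fun ⟨i, hi, hig⟩ => ?_⟩
    have := headI_le_of_pairwise (pairwise_posOf (k := 1) s) hi
    omega
  · rw [hcut.filter_eq, ← hxs]
    refine (isSplit_forestWord_weight_head ht0).append_right fun b hb a ha => hcut.lt b ?_ a ha
    rw [← hxs]; exact List.mem_of_mem_drop hb

theorem weight_getLastI_ge_of_indecomposable {M : ℕ} {fr : List LTree} (hf : ∀ t ∈ fr, IsPT t)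
    (hne : fr ≠ []) (hxs : forestWord fr = s.filter (· ≠ M)) (hMs : M ∈ s)
    (hsM : ∀ x ∈ s, x ≤ M) (hlt : ∀ b ∈ s.filter (· ≠ M), ∀ a ∈ L, b < a)
    (hind : Indecomposable (L ++ s)) :
    (posOf M 1 s).length + forestWeight fr + 1 - (posOf M 1 s).getLastI ≤
      fr.getLastI.weight := by
  have hslen := length_posOf_add_length_filter (M := M) (k := 1) s
  rw [← hxs, length_forestWord hf] at hslen
  have hIne : posOf M 1 s ≠ [] := fun h => posOf_eq_nil_iff.1 h hMs
  have hgl := bounds_of_mem_posOf (List.getLastI_mem hIne)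
  have := (hf _ (List.getLastI_mem hne)).weight_pos
  have := weight_le_forestWeight (List.getLastI_mem hne)
  by_contra! hgt
  obtain ⟨j', hj'⟩ : ∃ j', j' = s.length - fr.getLastI.weight := ⟨_, rfl⟩
  have hMdrop : M ∉ s.drop j' := fun hM => by
    obtain ⟨i, hi, hle⟩ := (mem_drop_iff_exists_posOf (k := 1)).1 hM
    have := le_getLastI_of_pairwise (pairwise_posOf s) hi
    omega
  have hsplit := (isSplit_iff_isSplit_filter_ne hsM hMdrop).2 (by
    rw [← hxs, length_forestWord hf, show forestWeight fr - (s.length - j') =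
      forestWeight fr - fr.getLastI.weight by omega]
    exact isSplit_forestWord_sub_weight_last hf hne)
  refine hind (L.length + j') (by omega) (by rw [List.length_append]; omega)
    (hsplit.append_right ?_)
  intro b hb a ha
  refine hlt b (List.mem_filter.2 ⟨List.mem_of_mem_drop hb, ?_⟩) a ha
  simpa using fun hbM : b = M => hMdrop (hbM ▸ hb)

theorem isPT_node_posOf {fl fr : List LTree} (hfl : ∀ t ∈ fl, IsPT t)
    (hfr : ∀ t ∈ fr, IsPT t)
    (hxs : forestWord fr = s.filter (· ≠ wmax (L ++ s))) (hMs : wmax (L ++ s) ∈ s)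
    (hind : Indecomposable (L ++ s)) (hcut : IsLeftCut (L ++ s) L.length)
    (hmax : ∀ m, L.length < m → m ≤ (L ++ s).length → ¬IsLeftCut (L ++ s) m) :
    IsPT (.node (posOf (wmax (L ++ s)) 1 s) fl fr) := by
  have hslen := length_posOf_add_length_filter (M := wmax (L ++ s)) (k := 1) s
  rw [← hxs, length_forestWord hfr] at hslen
  have hIne : posOf (wmax (L ++ s)) 1 s ≠ [] := fun h => posOf_eq_nil_iff.1 h hMs
  refine .mk _ fl fr hIne (pairwise_posOf s) (fun i hi => (bounds_of_mem_posOf hi).1)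
    (fun hfr0 => ?_) (fun hfr0 => ⟨?_, ?_, ?_, ?_⟩) hfl hfr
  · subst hfr0
    have hall : ∀ a ∈ s, a = wmax (L ++ s) := fun a ha => by
      by_contra haM
      have : a ∈ forestWord [] := hxs ▸ List.mem_filter.2 ⟨ha, by simpa⟩
      simp at this
    rw [posOf_eq_range' hall, List.length_range']
  · exact (bounds_of_mem_posOf (List.headI_mem hIne)).1
  · obtain ⟨t0, ts0, rfl⟩ := List.exists_cons_of_ne_nil hfr0
    exact headI_posOf_le_of_isLeftCut hfr hxs hcut hmax
  · have := (bounds_of_mem_posOf (List.getLastI_mem hIne)).2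
    rw [rightWeight]
    omega
  · exact weight_getLastI_ge_of_indecomposable hfr hfr0 hxs hMs
      (fun x hx => le_wmax_of_mem (List.mem_append_right L hx)) hcut.lt hind

theorem exists_treeWord_eq_append (hu : IsPacked (L ++ s)) (hne : L ++ s ≠ [])
    (hind : Indecomposable (L ++ s)) (hcut : IsLeftCut (L ++ s) L.length)
    (hmax : ∀ m, L.length < m → m ≤ (L ++ s).length → ¬IsLeftCut (L ++ s) m)
    (ih : ∀ v, IsPacked v → v.length < (L ++ s).length →
      ∃ f, (∀ t ∈ f, IsPT t) ∧ forestWord f = v) :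
    ∃ t, IsPT t ∧ treeWord t = L ++ s := by
  have hMs : wmax (L ++ s) ∈ s :=
    (List.mem_append.1 (wmax_mem hne)).resolve_left hcut.wmax_not_mem_left
  obtain ⟨hpk, hwmax⟩ := hu.filter_ne_wmax
  rw [hcut.filter_eq] at hpk hwmax
  have hsa := shiftAppend_map_sub (hpk.wmax_lt_of_append hcut.lt)
  have hM : wmax (L ++ s) = wmax (s.filter (· ≠ wmax (L ++ s))) +
      wmax (L.map (· - wmax (s.filter (· ≠ wmax (L ++ s))))) + 1 := by
    rw [← hsa, wmax_shiftAppend] at hwmax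
    have := hu.wmax_pos hne
    omega
  have hslen := length_posOf_add_length_filter (M := wmax (L ++ s)) (k := 1) s
  have hIpos : 0 < (posOf (wmax (L ++ s)) 1 s).length :=
    List.length_pos_iff.2 fun h => posOf_eq_nil_iff.1 h hMs
  have hspos : 0 < s.length := List.length_pos_of_mem hMs
  obtain ⟨fl, hfl, hfl_eq⟩ := ih _ (hpk.left_of_append hcut.lt)
    (by rw [List.length_map, List.length_append]; omega)
  obtain ⟨fr, hfr, hfr_eq⟩ := ih _ (hpk.right_of_append hcut.lt)
    (by rw [List.length_append]; omega)
  refine ⟨.node (posOf (wmax (L ++ s)) 1 s) fl fr,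
    isPT_node_posOf hfl hfr hfr_eq hMs hind hcut hmax, ?_⟩
  rw [treeWord_node, hfl_eq, hfr_eq, ← hM, place_posOf, (List.append_inj hsa (by simp)).1]

end LeftCut

theorem exists_treeWord_eq {u : List ℕ} (hu : IsPacked u) (hne : u ≠ [])
    (hind : Indecomposable u)
    (ih : ∀ v, IsPacked v → v.length < u.length →
      ∃ f, (∀ t ∈ f, IsPT t) ∧ forestWord f = v) :
    ∃ t, IsPT t ∧ treeWord t = u := by
  classical
  have h0 : IsLeftCut u 0 := ⟨by simp, by simp [IsSplit]⟩
  obtain ⟨l, hl, hcut, hmax⟩ : ∃ l ≤ u.length,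
      IsLeftCut u l ∧ ∀ m, l < m → m ≤ u.length → ¬IsLeftCut u m :=
    ⟨_, Nat.findGreatest_le _, Nat.findGreatest_spec (Nat.zero_le _) h0,
      fun _ => Nat.findGreatest_is_greatest⟩
  obtain ⟨L, s, rfl, rfl⟩ : ∃ L s, L ++ s = u ∧ L.length = l :=
    ⟨u.take l, u.drop l, List.take_append_drop _ _, List.length_take_of_le hl⟩
  exact exists_treeWord_eq_append hu hne hind hcut hmax ih

theorem exists_forestWord_eq {w : List ℕ} (hw : IsPacked w) :
    ∃ f, (∀ t ∈ f, IsPT t) ∧ forestWord f = w := by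
  induction hn : w.length using Nat.strong_induction_on generalizing w with
  | _ n ih =>
    subst hn
    rcases eq_or_ne w [] with rfl | hne
    · exact ⟨[], by simp, rfl⟩
    obtain ⟨u, R, hu, hR, hind, hune, rfl⟩ := exists_indecomposable_shiftAppend_eq hw hne
    have hlen : (shiftAppend u R).length = u.length + R.length := by simp [shiftAppend]
    obtain ⟨t, ht, rfl⟩ :=
      exists_treeWord_eq hu hune hind fun v hv hlt => ih _ (by omega) hv rfl
    obtain ⟨f, hf, rfl⟩ := ih _ (by have := List.length_pos_iff.2 hune; omega) hR rfl
    exact ⟨t :: f, List.forall_mem_cons.2 ⟨ht, hf⟩, forestWord_cons t f⟩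

theorem forestWord_inj {f g : List LTree} (hf : ∀ t ∈ f, IsPT t) (hg : ∀ t ∈ g, IsPT t)
    (heq : forestWord f = forestWord g) : f = g :=
  forestWord_inj_of_forall hf hg (fun t ht _ ht' => treeWord_inj (hf t ht) ht') heq

theorem card_packedWords_eq_card_packedForests (n : ℕ) :
    Nat.card {w : List ℕ // IsPacked w ∧ w.length = n} =
      Nat.card {f : List LTree // (∀ t ∈ f, IsPT t) ∧ forestWeight f = n} := by
  refine (Nat.card_congr (Equiv.ofBijective (fun f => ⟨forestWord f.1,
    isPacked_forestWord f.2.1, (length_forestWord f.2.1).trans f.2.2⟩) ⟨?_, ?_⟩)).symm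
  · rintro ⟨f, hf, _⟩ ⟨g, hg, _⟩ h
    exact Subtype.ext (forestWord_inj hf hg (congrArg Subtype.val h))
  · rintro ⟨w, hw, rfl⟩
    obtain ⟨f, hf, rfl⟩ := exists_forestWord_eq hw
    exact ⟨⟨f, hf, (length_forestWord hf).symm⟩, rfl⟩
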